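/- Let S : ℕ with S ≥ 1, let w : Fin S → ℝ satisfy w s > 0 for all s and Σ_s w s = 1, let g : Fin S → ℝ with |g s| ≤ M for all s, and let C > 0 and η > 0. Define the simplex Δ := {q : Fin S → ℝ | ∀ s, 0 ≤ q s, and Σ_s q s = 1}, KL(q‖p) := Σ_s q s · log (q s / p s), and the KL ball B := {q ∈ Δ | KL(q‖w) ≤ C}. Suppose q : ℕ → (Fin S → ℝ) satisfies q 0 = w, q t ∈ B for all t, and for every t, q (t+1) minimizes q' ↦ η·(Σ_s g s · q' s) + KL(q'‖q t) over q' ∈ B. Then for every comparator p ∈ B and every T : ℕ with T ≥ 1, (1/T)·Σ_{t=0}^{T−1} (Σ_s g s · q t s − Σ_s g s · p s) ≤ C/(η·T) + η·M²/2. In particular, with η = √(2C/(M²·T)) the averaged iterate's linear objective is within √2·M·√(C/T) of the optimum over the ball. -/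

import Mathlib

open Real Finset

/-- Discrete Kullback--Leibler divergence `KL(q‖p) = Σ_s q_s log(q_s / p_s)`
(with the convention `Real.log 0 = 0`, so terms with `q s = 0` vanish). -/
noncomputable def dKL {S : ℕ} (q p : Fin S → ℝ) : ℝ :=
  ∑ s, q s * Real.log (q s / p s)

/-- Membership in the KL ball of radius `C` around `w` within the probability simplex. -/
def inKLBall {S : ℕ} (w : Fin S → ℝ) (C : ℝ) (q : Fin S → ℝ) : Prop :=
  (∀ s, 0 ≤ q s) ∧ (∑ s, q s = 1) ∧ dKL q w ≤ C

/-!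
A minimiser `x` of `u ↦ ⟨c, u⟩ + KL(u‖y)` over a convex subset `K` of the simplex is strictly
positive, because `z log z` has slope `-∞` at `0`. Then `KL(u‖y) = KL(u‖x) + ⟨u, log (x/y)⟩`, and
`KL(u‖x)` is quadratically small near `x` (it is at most the `χ²`-divergence), so minimality along
the segment from `x` to `p ∈ K` gives the three-point inequality
`⟨c, x⟩ + KL(x‖y) + KL(p‖x) ≤ ⟨c, p⟩ + KL(p‖y)`.

With `c = η g`, `x = q (t+1)`, `y = q t`, the per-step regret is therefore at most
`KL(p‖q t) - KL(p‖q (t+1)) + [η ⟨g, y - x⟩ - KL(x‖y)]`. By the Gibbs variational principle the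
bracket is at most the log-moment generating function `log E_y[exp (-η (g - E_y g))]`, which is
at most `η² M² / 2` by Hoeffding's lemma (this is the dual form of Pinsker's inequality). The sum
over `t` telescopes to `KL(p‖w) ≤ C`.
-/

open Filter Topology in
theorem nonneg_of_forall_add_mul_nonneg {a b : ℝ} (h : ∀ t ∈ Set.Ioc (0 : ℝ) 1, 0 ≤ a + t * b) :
    0 ≤ a := by
  have hlim : Tendsto (fun t => a + t * b) (𝓝[>] 0) (𝓝 a) := by
    have hcont : Continuous fun t : ℝ => a + t * b := by fun_prop
    simpa using (hcont.tendsto 0).mono_left nhdsWithin_le_nhds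
  exact ge_of_tendsto hlim (eventually_of_mem (Ioc_mem_nhdsGT zero_lt_one) h)

theorem one_div_mul_sum_le_of_mul_le_sub {a Φ : ℕ → ℝ} {η b C : ℝ} (hη : 0 < η) {T : ℕ}
    (hT : 0 < T) (hstep : ∀ t, η * a t ≤ Φ t - Φ (t + 1) + η * b) (hΦ₀ : Φ 0 ≤ C)
    (hΦT : 0 ≤ Φ T) : 1 / (T : ℝ) * ∑ t ∈ range T, a t ≤ C / (η * T) + b := by
  have hsum : η * ∑ t ∈ range T, a t ≤ C + T * (η * b) :=
    calc η * ∑ t ∈ range T, a t ≤ ∑ t ∈ range T, (Φ t - Φ (t + 1) + η * b) := by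
          rw [mul_sum]
          exact sum_le_sum fun t _ => hstep t
      _ = Φ 0 - Φ T + T * (η * b) := by
          rw [sum_add_distrib, sum_range_sub', sum_const, card_range, nsmul_eq_mul]
      _ ≤ C + T * (η * b) := by linarith
  have hT' : (0 : ℝ) < T := by exact_mod_cast hT
  calc 1 / (T : ℝ) * ∑ t ∈ range T, a t = (η * ∑ t ∈ range T, a t) / (η * T) := by field_simp
    _ ≤ (C + T * (η * b)) / (η * T) := by gcongr
    _ = C / (η * T) + b := by field_simp

theorem sum_mul_exp_le_of_abs_le {ι : Type*} [Fintype ι] {y g : ι → ℝ} (hy : ∀ i, 0 ≤ y i)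
    (hy1 : ∑ i, y i = 1) {M : ℝ} (hg : ∀ i, |g i| ≤ M) (t : ℝ) :
    ∑ i, y i * exp (t * (g i - g ⬝ᵥ y)) ≤ exp (M ^ 2 * t ^ 2 / 2) := by
  let _ : MeasurableSpace ι := ⊤
  have : MeasurableSingletonClass ι := ⟨fun _ => trivial⟩
  have hy1' : ∑ i, ENNReal.ofReal (y i) = 1 := by
    rw [← ENNReal.ofReal_sum_of_nonneg fun i _ => hy i, hy1, ENNReal.ofReal_one]
  set μ := (PMF.ofFintype _ hy1').toMeasure
  have hint (f : ι → ℝ) : ∫ i, f i ∂μ = ∑ i, y i * f i := by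
    simp [μ, PMF.integral_eq_sum, ENNReal.toReal_ofReal (hy _)]
  have hoeffding := ProbabilityTheory.hasSubgaussianMGF_of_mem_Icc (μ := μ) (X := g)
    (a := -M) (b := M) Measurable.of_discrete.aemeasurable
    (MeasureTheory.ae_of_all _ fun i => abs_le.1 (hg i))
  have hmgf := hoeffding.mgf_le t
  rw [ProbabilityTheory.mgf, hint, hint] at hmgf
  convert hmgf using 3
  · simp [dotProduct, mul_comm]
  · simp only [NNReal.coe_pow, NNReal.coe_div, coe_nnnorm, Real.norm_eq_abs, sub_neg_eq_add,
      NNReal.coe_ofNat]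
    rw [div_pow, sq_abs]
    ring

theorem convexOn_mul_log_div {w : ℝ} (hw : w ≠ 0) :
    ConvexOn ℝ (Set.Ici 0) fun z => z * log (z / w) := by
  refine (convexOn_mul_log.sub ((LinearMap.mul ℝ ℝ (log w)).concaveOn (convex_Ici 0))).congr
    fun z _ => ?_
  rcases eq_or_ne z 0 with hz | hz
  · simp [hz]
  · simp [log_div hz hw, mul_sub, mul_comm]

section dKL

variable {S : ℕ}

theorem dKL_self (x : Fin S → ℝ) : dKL x x = 0 := by
  simp [dKL]

theorem dKL_nonneg {p x : Fin S → ℝ} (hp : ∀ s, 0 ≤ p s) (hx : ∀ s, 0 < x s)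
    (hsum : ∑ s, x s ≤ ∑ s, p s) : 0 ≤ dKL p x := by
  have key (s : Fin S) : p s - x s ≤ p s * log (p s / x s) := by
    have e : x s * InformationTheory.klFun (p s / x s) = p s * log (p s / x s) + x s - p s := by
      rw [InformationTheory.klFun_apply]
      field_simp [(hx s).ne']
    have := mul_nonneg (hx s).le (InformationTheory.klFun_nonneg (div_nonneg (hp s) (hx s).le))
    linarith
  have := sum_le_sum fun s (_ : s ∈ univ) => key s
  rw [sum_sub_distrib] at this
  rw [dKL]
  linarith

theorem dKL_le_sum_sq_div {u x : Fin S → ℝ} (hu : ∀ s, 0 ≤ u s) (hx : ∀ s, 0 < x s)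
    (hsum : ∑ s, u s = ∑ s, x s) : dKL u x ≤ ∑ s, (u s - x s) ^ 2 / x s := by
  have key (s : Fin S) : u s * log (u s / x s) ≤ (u s - x s) ^ 2 / x s + (u s - x s) := by
    rcases (hu s).eq_or_lt with h | h
    · rw [← h, sq, zero_sub, neg_mul_neg, mul_div_cancel_right₀ _ (hx s).ne']
      simp
    · have := mul_le_mul_of_nonneg_left (log_le_sub_one_of_pos (div_pos h (hx s))) h.le
      have e : u s * (u s / x s - 1) = (u s - x s) ^ 2 / x s + (u s - x s) := by
        field_simp [(hx s).ne']
        ring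
      linarith
  calc dKL u x ≤ ∑ s, ((u s - x s) ^ 2 / x s + (u s - x s)) := sum_le_sum fun s _ => key s
    _ = ∑ s, (u s - x s) ^ 2 / x s := by
      rw [sum_add_distrib, sum_sub_distrib, hsum, sub_self, add_zero]

theorem dKL_eq_dKL_add_dotProduct_log_div {x y : Fin S → ℝ} (hx : ∀ s, x s ≠ 0)
    (hy : ∀ s, y s ≠ 0) (u : Fin S → ℝ) :
    dKL u y = dKL u x + u ⬝ᵥ fun s => log (x s / y s) := by
  rw [dKL, dKL, dotProduct, ← sum_add_distrib]
  refine sum_congr rfl fun s _ => ?_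
  rcases eq_or_ne (u s) 0 with hu | hu
  · simp [hu]
  · rw [log_div hu (hy s), log_div hu (hx s), log_div (hx s) (hy s)]
    ring

theorem dKL_add_smul_sub_le {x y : Fin S → ℝ} (hx : ∀ s, 0 ≤ x s) (hy : ∀ s, 0 < y s)
    {t : ℝ} (ht0 : 0 ≤ t) (ht1 : t ≤ 1) {s₀ : Fin S} (hs₀ : x s₀ = 0) :
    dKL (x + t • (y - x)) y ≤ (1 - t) * dKL x y + t * (y s₀ * log t) := by
  have key (s : Fin S) : (x s + t * (y s - x s)) * log ((x s + t * (y s - x s)) / y s) ≤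
      (1 - t) * (x s * log (x s / y s)) + if s = s₀ then t * (y s₀ * log t) else 0 := by
    split_ifs with h
    · subst h
      simp only [hs₀, zero_add, sub_zero, zero_mul, mul_zero, mul_div_assoc,
        div_self (hy s).ne', mul_one]
      exact le_of_eq (by ring)
    · have := (convexOn_mul_log_div (hy s).ne').2 (Set.mem_Ici.2 (hx s))
        (Set.mem_Ici.2 (hy s).le) (sub_nonneg.2 ht1) ht0 (sub_add_cancel 1 t)
      simp only [smul_eq_mul, div_self (hy s).ne', log_one, mul_zero, add_zero] at this
      rwa [add_zero, show x s + t * (y s - x s) = (1 - t) * x s + t * y s by ring]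
  calc dKL (x + t • (y - x)) y ≤ ∑ s, ((1 - t) * (x s * log (x s / y s)) +
        if s = s₀ then t * (y s₀ * log t) else 0) := sum_le_sum fun s _ => key s
    _ = (1 - t) * dKL x y + t * (y s₀ * log t) := by
      rw [sum_add_distrib, sum_ite_eq' univ s₀, if_pos (mem_univ _), dKL, mul_sum]

theorem convexOn_dKL {w : Fin S → ℝ} (hw : ∀ s, w s ≠ 0) :
    ConvexOn ℝ (Set.Ici 0) fun q => dKL q w := by
  refine ⟨convex_Ici 0, fun x hx y hy a b ha hb hab => ?_⟩
  simp only [dKL, smul_eq_mul, mul_sum, ← sum_add_distrib, Pi.add_apply, Pi.smul_apply]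
  exact sum_le_sum fun s _ => (convexOn_mul_log_div (hw s)).2 (hx s) (hy s) ha hb hab

theorem dotProduct_sub_dKL_le_log_sum_mul_exp {x y : Fin S → ℝ} (hx : ∀ s, 0 ≤ x s)
    (hx1 : ∑ s, x s = 1) (hy : ∀ s, 0 < y s) (f : Fin S → ℝ) :
    f ⬝ᵥ x - dKL x y ≤ log (∑ s, y s * exp (f s)) := by
  set Z := ∑ s, y s * exp (f s)
  have hZ : 0 < Z := sum_pos (fun s _ => mul_pos (hy s) (exp_pos _))
    (nonempty_of_sum_ne_zero (hx1 ▸ one_ne_zero))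
  -- the Gibbs distribution `r ∝ y exp f`, for which `0 ≤ KL(x‖r) = KL(x‖y) + log Z - ⟨f, x⟩`
  set r : Fin S → ℝ := fun s => y s * exp (f s) / Z
  have hr (s : Fin S) : 0 < r s := div_pos (mul_pos (hy s) (exp_pos _)) hZ
  have hr1 : ∑ s, r s = 1 := by rw [← sum_div, div_self hZ.ne']
  have hKL := dKL_nonneg hx hr (by rw [hr1, hx1])
  rw [dKL_eq_dKL_add_dotProduct_log_div (fun s => (hy s).ne') (fun s => (hr s).ne')] at hKL
  have hlog (s : Fin S) : log (y s / r s) = log Z - f s := by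
    rw [div_div_eq_mul_div, mul_div_mul_left _ _ (hy s).ne', log_div hZ.ne' (exp_pos _).ne',
      log_exp]
  simp only [hlog, dotProduct, mul_sub, sum_sub_distrib, ← sum_mul, hx1, one_mul] at hKL
  rw [dotProduct_comm, dotProduct]
  linarith

theorem mul_dotProduct_sub_sub_dKL_le {x y g : Fin S → ℝ} (hx : ∀ s, 0 ≤ x s)
    (hx1 : ∑ s, x s = 1) (hy : ∀ s, 0 < y s) (hy1 : ∑ s, y s = 1) {M : ℝ} (hg : ∀ s, |g s| ≤ M)
    (η : ℝ) : η * (g ⬝ᵥ y - g ⬝ᵥ x) - dKL x y ≤ η ^ 2 * M ^ 2 / 2 := by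
  have hgibbs := dotProduct_sub_dKL_le_log_sum_mul_exp hx hx1 hy fun s => -η * (g s - g ⬝ᵥ y)
  have hhoeffding := sum_mul_exp_le_of_abs_le (fun s => (hy s).le) hy1 hg (-η)
  have hpos : 0 < ∑ s, y s * exp (-η * (g s - g ⬝ᵥ y)) :=
    sum_pos (fun s _ => mul_pos (hy s) (exp_pos _)) (nonempty_of_sum_ne_zero (hy1 ▸ one_ne_zero))
  have hlin : (fun s => -η * (g s - g ⬝ᵥ y)) ⬝ᵥ x = η * (g ⬝ᵥ y - g ⬝ᵥ x) := by
    calc ∑ s, -η * (g s - g ⬝ᵥ y) * x s = η * (g ⬝ᵥ y) * ∑ s, x s - η * ∑ s, g s * x s := by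
          rw [mul_sum, mul_sum, ← sum_sub_distrib]
          exact sum_congr rfl fun s _ => by ring
      _ = η * (g ⬝ᵥ y - g ⬝ᵥ x) := by rw [hx1, mul_one, mul_sub]; rfl
  calc η * (g ⬝ᵥ y - g ⬝ᵥ x) - dKL x y ≤ log (∑ s, y s * exp (-η * (g s - g ⬝ᵥ y))) :=
        hlin ▸ hgibbs
    _ ≤ log (exp (M ^ 2 * (-η) ^ 2 / 2)) := log_le_log hpos hhoeffding
    _ = η ^ 2 * M ^ 2 / 2 := by rw [log_exp]; ring

end dKL

section minimizer

variable {S : ℕ}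

theorem convex_setOf_inKLBall {w : Fin S → ℝ} (hw : ∀ s, w s ≠ 0) (C : ℝ) :
    Convex ℝ {q | inKLBall w C q} := by
  rintro x ⟨hx0, hx1, hxC⟩ y ⟨hy0, hy1, hyC⟩ a b ha hb hab
  refine ⟨fun s => ?_, ?_, ?_⟩
  · simp only [Pi.add_apply, Pi.smul_apply, smul_eq_mul]
    have := hx0 s
    have := hy0 s
    positivity
  · simp [sum_add_distrib, ← mul_sum, hx1, hy1, hab]
  · calc dKL (a • x + b • y) w ≤ a * dKL x w + b * dKL y w :=
          (convexOn_dKL hw).2 hx0 hy0 ha hb hab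
      _ ≤ a * C + b * C := by gcongr
      _ = C := by rw [← add_mul, hab, one_mul]

theorem setOf_inKLBall_subset_stdSimplex (w : Fin S → ℝ) (C : ℝ) :
    {q | inKLBall w C q} ⊆ stdSimplex ℝ (Fin S) :=
  fun _ hq => ⟨hq.1, hq.2.1⟩

theorem pos_of_isMinOn_dotProduct_add_dKL {K : Set (Fin S → ℝ)} (hK : Convex ℝ K)
    (hK₀ : K ⊆ Set.Ici 0) {c x y : Fin S → ℝ} (hyK : y ∈ K) (hy : ∀ s, 0 < y s) (hxK : x ∈ K)
    (hmin : IsMinOn (fun u => c ⬝ᵥ u + dKL u y) K x) (s : Fin S) : 0 < x s := by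
  by_contra! hs
  have hx₀ : x s = 0 := le_antisymm hs (hK₀ hxK s)
  set a := c ⬝ᵥ (y - x) - dKL x y
  -- a step of size `t` towards `y` changes the objective by at most `t (a + y s log t)`
  set t := exp (-(|a| + 1) / y s)
  have ht0 : 0 < t := exp_pos _
  have ht1 : t ≤ 1 := exp_le_one_iff.2 (div_nonpos_of_nonpos_of_nonneg
    (by linarith [abs_nonneg a]) (hy s).le)
  have hlog : y s * log t = -(|a| + 1) := by
    rw [log_exp, mul_div_cancel₀ _ (hy s).ne']
  have hle := isMinOn_iff.1 hmin _ (hK.add_smul_sub_mem hxK hyK ⟨ht0.le, ht1⟩)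
  have hdKL := dKL_add_smul_sub_le (hK₀ hxK) hy ht0.le ht1 hx₀
  simp only [dotProduct_add, dotProduct_smul, smul_eq_mul] at hle
  have : 0 ≤ t * (a + y s * log t) := by linarith
  rw [hlog] at this
  nlinarith [le_abs_self a]

theorem dotProduct_add_dKL_add_dKL_le_of_isMinOn {K : Set (Fin S → ℝ)} (hK : Convex ℝ K)
    (hKΔ : K ⊆ stdSimplex ℝ (Fin S)) {c x y p : Fin S → ℝ} (hx : ∀ s, 0 < x s)
    (hy : ∀ s, 0 < y s) (hxK : x ∈ K) (hpK : p ∈ K)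
    (hmin : IsMinOn (fun u => c ⬝ᵥ u + dKL u y) K x) :
    c ⬝ᵥ x + dKL x y + dKL p x ≤ c ⬝ᵥ p + dKL p y := by
  set ℓ : Fin S → ℝ := fun s => log (x s / y s)
  have hdec (u : Fin S → ℝ) : dKL u y = dKL u x + u ⬝ᵥ ℓ :=
    dKL_eq_dKL_add_dotProduct_log_div (fun s => (hx s).ne') (fun s => (hy s).ne') u
  suffices 0 ≤ c ⬝ᵥ (p - x) + (p - x) ⬝ᵥ ℓ by
    rw [hdec p, show dKL x y = x ⬝ᵥ ℓ from rfl]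
    rw [dotProduct_sub, sub_dotProduct] at this
    linarith
  refine nonneg_of_forall_add_mul_nonneg (b := ∑ s, (p s - x s) ^ 2 / x s) fun t ht => ?_
  have hu := hK.add_smul_sub_mem hxK hpK ⟨ht.1.le, ht.2⟩
  have hχ : dKL (x + t • (p - x)) x ≤ t ^ 2 * ∑ s, (p s - x s) ^ 2 / x s := by
    refine (dKL_le_sum_sq_div (hKΔ hu).1 hx ?_).trans_eq ?_
    · rw [(hKΔ hu).2, (hKΔ hxK).2]
    · simp [mul_sum, mul_pow, mul_div_assoc]
  have hle := isMinOn_iff.1 hmin _ hu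
  rw [hdec x, hdec (x + t • (p - x)), dKL_self] at hle
  simp only [dotProduct_add, add_dotProduct, dotProduct_smul, smul_dotProduct, smul_eq_mul] at hle
  have : 0 ≤ t * (c ⬝ᵥ (p - x) + (p - x) ⬝ᵥ ℓ + t * ∑ s, (p s - x s) ^ 2 / x s) := by
    linarith
  exact (mul_nonneg_iff_of_pos_left ht.1).1 this

theorem mul_dotProduct_sub_le_of_isMinOn {K : Set (Fin S → ℝ)} (hK : Convex ℝ K)
    (hKΔ : K ⊆ stdSimplex ℝ (Fin S)) {g x y p : Fin S → ℝ} {M η : ℝ} (hg : ∀ s, |g s| ≤ M)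
    (hx : ∀ s, 0 < x s) (hy : ∀ s, 0 < y s) (hxK : x ∈ K) (hyK : y ∈ K) (hpK : p ∈ K)
    (hmin : IsMinOn (fun u => (η • g) ⬝ᵥ u + dKL u y) K x) :
    η * (g ⬝ᵥ y - g ⬝ᵥ p) ≤ dKL p y - dKL p x + η * (η * M ^ 2 / 2) := by
  have hthree := dotProduct_add_dKL_add_dKL_le_of_isMinOn hK hKΔ hx hy hxK hpK hmin
  have hpinsker := mul_dotProduct_sub_sub_dKL_le (hKΔ hxK).1 (hKΔ hxK).2 hy (hKΔ hyK).2 hg η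
  simp only [smul_dotProduct, smul_eq_mul] at hthree
  linarith

end minimizer

theorem mirror_descent_kl_ball_regret_general (S : ℕ) (w : Fin S → ℝ)
    (hw : ∀ s, 0 < w s) (g : Fin S → ℝ) (M : ℝ)
    (hg : ∀ s, |g s| ≤ M) (C : ℝ) (η : ℝ) (hη : 0 < η)
    (q : ℕ → Fin S → ℝ) (hq0 : q 0 = w) (hqB : ∀ t, inKLBall w C (q t))
    (hmin : ∀ t, ∀ q' : Fin S → ℝ, inKLBall w C q' →
      η * (∑ s, g s * q (t + 1) s) + dKL (q (t + 1)) (q t) ≤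
        η * (∑ s, g s * q' s) + dKL q' (q t)) :
    ∀ p : Fin S → ℝ, inKLBall w C p → ∀ T : ℕ, 1 ≤ T →
      (1 / (T : ℝ)) * ∑ t ∈ Finset.range T, ((∑ s, g s * q t s) - ∑ s, g s * p s) ≤
        C / (η * T) + η * M ^ 2 / 2 := by
  intro p hp T hT
  have hK := convex_setOf_inKLBall (fun s => (hw s).ne') C
  have hKΔ := setOf_inKLBall_subset_stdSimplex w C
  have hmin' (t : ℕ) :
      IsMinOn (fun u => (η • g) ⬝ᵥ u + dKL u (q t)) {u | inKLBall w C u} (q (t + 1)) :=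
    isMinOn_iff.2 fun u hu => by
      simp only [smul_dotProduct, smul_eq_mul]
      exact hmin t u hu
  have hpos (t : ℕ) : ∀ s, 0 < q t s := by
    induction t with
    | zero => rwa [hq0]
    | succ t ih =>
      exact pos_of_isMinOn_dotProduct_add_dKL hK (fun u hu => (hKΔ hu).1) (hqB t) ih
        (hqB (t + 1)) (hmin' t)
  exact one_div_mul_sum_le_of_mul_le_sub hη hT (Φ := fun t => dKL p (q t))
    (fun t => mul_dotProduct_sub_le_of_isMinOn hK hKΔ hg (hpos (t + 1)) (hpos t) (hqB (t + 1))
      (hqB t) hp (hmin' t)) (hq0 ▸ hp.2.2)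
    (dKL_nonneg hp.1 (hpos T) ((hqB T).2.1.trans hp.2.1.symm).le)

/-- Mirror-descent regret bound for the KL-ball adversary: if the iterates `q t` start at
`w`, stay in the KL ball `B` of radius `C`, and each `q (t+1)` minimizes
`q' ↦ η ⟨g, q'⟩ + KL(q'‖q t)` over `B`, then for every comparator `p ∈ B` and `T ≥ 1`,
`(1/T) Σ_{t<T} (⟨g, q t⟩ − ⟨g, p⟩) ≤ C/(ηT) + η M²/2`. -/
theorem mirror_descent_kl_ball_regret (S : ℕ) (hS : 1 ≤ S) (w : Fin S → ℝ)
    (hw : ∀ s, 0 < w s) (hwsum : ∑ s, w s = 1) (g : Fin S → ℝ) (M : ℝ)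
    (hg : ∀ s, |g s| ≤ M) (C : ℝ) (hC : 0 < C) (η : ℝ) (hη : 0 < η)
    (q : ℕ → Fin S → ℝ) (hq0 : q 0 = w) (hqB : ∀ t, inKLBall w C (q t))
    (hmin : ∀ t, ∀ q' : Fin S → ℝ, inKLBall w C q' →
      η * (∑ s, g s * q (t + 1) s) + dKL (q (t + 1)) (q t) ≤
        η * (∑ s, g s * q' s) + dKL q' (q t)) :
    ∀ p : Fin S → ℝ, inKLBall w C p → ∀ T : ℕ, 1 ≤ T →
      (1 / (T : ℝ)) * ∑ t ∈ Finset.range T, ((∑ s, g s * q t s) - ∑ s, g s * p s) ≤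
        C / (η * T) + η * M ^ 2 / 2 :=
  mirror_descent_kl_ball_regret_general S w hw g M hg C η hη q hq0 hqB hmin
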